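/- For a ring R the following are equivalent: (i) R is a potent ΔU ring; (ii) R is a J-clean ring, i.e., every element a ∈ R can be written as a = e + j with e an idempotent and j ∈ J(R). -/

import Mathlib

/-- `Δ(R) = {r ∈ R : r + u is a unit for every unit u of R}`. -/
def Delta (R : Type*) [Ring R] : Set R := {r : R | ∀ u : Rˣ, IsUnit (r + (u : R))}

/-- A ring `R` is a ΔU ring if every unit `u` satisfies `u - 1 ∈ Δ(R)`. -/
def IsDeltaU (R : Type*) [Ring R] : Prop := ∀ u : Rˣ, (u : R) - 1 ∈ Delta R

/-- `R` is semi-potent: every element outside `J(R)` has a nonzero idempotent in `aR`. -/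
def IsSemipotent (R : Type*) [Ring R] : Prop :=
  ∀ a : R, a ∉ Ideal.jacobson (⊥ : Ideal R) →
    ∃ e : R, e ≠ 0 ∧ e * e = e ∧ ∃ r : R, e = a * r

/-- Idempotents lift modulo `J(R)`. -/
def IdempotentsLiftModJ (R : Type*) [Ring R] : Prop :=
  ∀ a : R, a - a ^ 2 ∈ Ideal.jacobson (⊥ : Ideal R) →
    ∃ e : R, e * e = e ∧ a - e ∈ Ideal.jacobson (⊥ : Ideal R)

/-! Δ(R) contains J(R), is closed under sums and products and contains no nonzero idempotent; in
a ΔU ring it also contains every square-zero element. For an idempotent `e` the corner map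
`x ↦ exe` is therefore multiplicative modulo Δ, the defect `ex(1-e)ye` being a product of two
square-zero elements. If `a - a²` were not in J, semipotence would give a nonzero idempotent
`e ∈ (a - a²)R`; then `α = eae` makes `α(e - α)` invertible in `eRe` modulo Δ, so `α` and `e - α`
are right invertible in `eRe`. A ΔU ring is Dedekind-finite, so both are `≡ e` modulo Δ, whence
`e ∈ Δ` and `e = 0`. Thus `R/J` is Boolean and lifting idempotents makes `R` J-clean.
Conversely, in a J-clean ring a unit `u = e + j` forces `e = 1`, so `u - 1 ∈ J ⊆ Δ`. -/

section

variable {R : Type*} [Ring R]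

theorem isUnit_one_add_of_mem_jacobson_bot {j : R} (hj : j ∈ Ideal.jacobson (⊥ : Ideal R)) :
    IsUnit (1 + j) := by
  have left_inv : ∀ y, ∃ z, z * (1 + y * j) = 1 := fun y => by
    obtain ⟨z, hz⟩ := Ideal.mem_jacobson_iff.1 hj y
    exact ⟨z, by rwa [Ideal.mem_bot, sub_eq_zero, mul_assoc, ← mul_add_one, add_comm] at hz⟩
  obtain ⟨z, hz⟩ := one_mul j ▸ left_inv 1
  obtain ⟨w, hw⟩ := left_inv (-z)
  have hz_eq : 1 + -z * j = z := by
    rw [mul_one_add] at hz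
    rw [neg_mul, ← hz]
    abel
  have hwz : w * z = 1 := hz_eq ▸ hw
  have hw_eq : w = 1 + j := calc
    w = w * (z * (1 + j)) := by rw [hz, mul_one]
    _ = 1 + j := by rw [← mul_assoc, hwz, one_mul]
  exact ⟨⟨1 + j, z, hw_eq ▸ hwz, hz⟩, rfl⟩

namespace Delta

theorem add_mem {r s : R} (hr : r ∈ Delta R) (hs : s ∈ Delta R) : r + s ∈ Delta R := by
  intro u
  obtain ⟨v, hv⟩ := hs u
  simpa only [add_assoc, hv] using hr v

theorem neg_mem {r : R} (hr : r ∈ Delta R) : -r ∈ Delta R := by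
  intro u
  simpa [neg_add_eq_sub, ← neg_sub', sub_eq_add_neg] using (hr (-u)).neg

theorem sub_mem {r s : R} (hr : r ∈ Delta R) (hs : s ∈ Delta R) : r - s ∈ Delta R := by
  simpa only [sub_eq_add_neg] using add_mem hr (neg_mem hs)

theorem mul_units_mem {r : R} (hr : r ∈ Delta R) (u : Rˣ) : r * u ∈ Delta R := by
  intro v
  simpa [add_mul, mul_assoc] using (hr (v * u⁻¹)).mul u.isUnit

theorem mul_mem {r s : R} (hr : r ∈ Delta R) (hs : s ∈ Delta R) : r * s ∈ Delta R := by
  obtain ⟨v, hv⟩ := hs 1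
  have hrs : r * s = r * v - r := by
    rw [hv, Units.val_one, mul_add, mul_one, add_sub_cancel_right]
  exact hrs ▸ sub_mem (mul_units_mem hr v) hr

theorem jacobson_subset : (Ideal.jacobson (⊥ : Ideal R) : Set R) ⊆ Delta R := by
  intro j hj u
  have h : j + u = u * (1 + ↑u⁻¹ * j) := by
    rw [mul_add, mul_one, ← mul_assoc, u.mul_inv, one_mul, add_comm]
  exact h ▸ u.isUnit.mul (isUnit_one_add_of_mem_jacobson_bot (Ideal.mul_mem_left _ _ hj))

theorem eq_zero_of_isIdempotentElem {e : R} (he : IsIdempotentElem e) (hd : e ∈ Delta R) :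
    e = 0 := by
  have hunit : IsUnit (e - 1) := by simpa [sub_eq_add_neg] using hd (-1)
  rw [← hunit.mul_left_eq_zero, mul_sub, mul_one, he.eq, sub_self]

theorem exists_mul_eq_of_sub_mem {e x : R} (he : IsIdempotentElem e) (hex : e * x = x)
    (hd : x - e ∈ Delta R) : ∃ y, x * y = e := by
  obtain ⟨u, hu⟩ := hd 1
  refine ⟨↑u⁻¹, ?_⟩
  have h : e * ↑u = x := by
    rw [hu, Units.val_one, mul_add, mul_sub, hex, he.eq, mul_one, sub_add_cancel]
  rw [← h, mul_assoc, u.mul_inv, mul_one]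

end Delta

namespace IsDeltaU

theorem sub_one_mem (hdu : IsDeltaU R) {x : R} (hx : IsUnit x) : x - 1 ∈ Delta R :=
  hx.unit_spec ▸ hdu hx.unit

theorem mem_delta_of_mul_self_eq_zero (hdu : IsDeltaU R) {x : R} (hx : x * x = 0) :
    x ∈ Delta R := by
  simpa using hdu.sub_one_mem (IsNilpotent.isUnit_one_add ⟨2, by rw [sq, hx]⟩)

theorem isDedekindFiniteMonoid (hdu : IsDeltaU R) : IsDedekindFiniteMonoid R where
  mul_eq_one_symm {a b} hab := by
    set p := 1 - b * a
    have hap : a * p = 0 := by rw [mul_sub, mul_one, ← mul_assoc, hab, one_mul, sub_self]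
    have hpb : p * b = 0 := by rw [sub_mul, one_mul, mul_assoc, hab, mul_one, sub_self]
    have hp : IsIdempotentElem p := by
      rw [IsIdempotentElem, sub_mul, one_mul, mul_assoc, hap, mul_zero, sub_zero]
    have hp_eq : p * a * (b * p) = p := by rw [mul_assoc, ← mul_assoc a, hab, one_mul, hp.eq]
    have hpa : p * a * (p * a) = 0 := by rw [mul_assoc, ← mul_assoc a, hap, zero_mul, mul_zero]
    have hbp : b * p * (b * p) = 0 := by rw [mul_assoc, ← mul_assoc p, hpb, zero_mul, mul_zero]
    have hpd : p ∈ Delta R := hp_eq ▸ Delta.mul_mem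
      (hdu.mem_delta_of_mul_self_eq_zero hpa) (hdu.mem_delta_of_mul_self_eq_zero hbp)
    exact (sub_eq_zero.1 (Delta.eq_zero_of_isIdempotentElem hp hpd)).symm

theorem sub_mem_delta_of_mul_eq (hdu : IsDeltaU R) {e x y : R} (he : IsIdempotentElem e)
    (hxe : x * e = x) (hxy : x * y = e) : x - e ∈ Delta R := by
  have hinv : (x + (1 - e)) * (e * y + (1 - e)) = 1 := by
    rw [add_mul, mul_add, mul_add, ← mul_assoc, hxe, hxy, ← mul_assoc, he.one_sub_mul_self,
      zero_mul, he.one_sub.eq, mul_one_sub, hxe, sub_self, add_zero, zero_add, add_sub_cancel]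
  have hunit : IsUnit (x + (1 - e)) :=
    ⟨⟨_, _, hinv, hdu.isDedekindFiniteMonoid.mul_eq_one_symm hinv⟩, rfl⟩
  simpa [add_sub_left_comm] using hdu.sub_one_mem hunit

theorem corner_mul_sub_mem_delta (hdu : IsDeltaU R) {e : R} (he : IsIdempotentElem e) (x y : R) :
    e * (x * y) * e - e * x * e * (e * y * e) ∈ Delta R := by
  have hsplit : e * (x * y) * e - e * x * e * (e * y * e) =
      e * x * (1 - e) * ((1 - e) * y * e) := by
    have hee : ∀ z, e * (e * z) = e * z := fun z => by rw [← mul_assoc, he.eq]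
    simp only [mul_sub, sub_mul, mul_one, one_mul, mul_assoc, hee]
    abel
  refine hsplit ▸ Delta.mul_mem
    (hdu.mem_delta_of_mul_self_eq_zero ?_) (hdu.mem_delta_of_mul_self_eq_zero ?_)
  · rw [show e * x * (1 - e) * (e * x * (1 - e)) = e * x * ((1 - e) * e) * (x * (1 - e)) by
      simp only [mul_assoc], he.one_sub_mul_self, mul_zero, zero_mul]
  · rw [show (1 - e) * y * e * ((1 - e) * y * e) = (1 - e) * y * (e * (1 - e)) * (y * e) by
      simp only [mul_assoc], he.mul_one_sub_self, mul_zero, zero_mul]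

theorem eq_zero_of_sub_mul_self_mul_sub_mem_delta (hdu : IsDeltaU R) {e α γ : R}
    (he : IsIdempotentElem e) (heα : e * α = α) (hαe : α * e = α)
    (hd : (α - α * α) * γ - e ∈ Delta R) : e = 0 := by
  obtain ⟨m, hm⟩ := Delta.exists_mul_eq_of_sub_mem he
    (by rw [← mul_assoc, mul_sub, heα, ← mul_assoc, heα]) hd
  have hα : α - e ∈ Delta R := hdu.sub_mem_delta_of_mul_eq he hαe (y := (e - α) * γ * m)
    (by simpa only [← mul_assoc, mul_sub, hαe] using hm)
  have hα' : (e - α) - e ∈ Delta R := hdu.sub_mem_delta_of_mul_eq he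
    (by rw [sub_mul, he.eq, hαe]) (y := α * γ * m)
    (by simpa only [← mul_assoc, sub_mul, heα] using hm)
  have hneg : -e ∈ Delta R := by
    convert Delta.add_mem hα hα' using 1
    abel
  exact Delta.eq_zero_of_isIdempotentElem he (neg_neg e ▸ Delta.neg_mem hneg)

end IsDeltaU

theorem IsSemipotent.sub_sq_mem_jacobson (hsp : IsSemipotent R) (hdu : IsDeltaU R) (a : R) :
    a - a ^ 2 ∈ Ideal.jacobson (⊥ : Ideal R) := by
  by_contra hb
  obtain ⟨e, he0, he, c, hec⟩ := hsp _ hb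
  have hee : ∀ z, e * (e * z) = e * z := fun z => by rw [← mul_assoc, he]
  refine he0 (hdu.eq_zero_of_sub_mul_self_mul_sub_mem_delta he (α := e * a * e) (γ := e * c * e)
    (by simp only [mul_assoc, hee]) (by simp only [mul_assoc, he]) ?_)
  have key : (e * a * e - e * a * e * (e * a * e)) * (e * c * e) - e =
      (e * (a * (a * e * c)) * e - e * a * e * (e * (a * e * c) * e)) -
        (e * ((a - a ^ 2) * c) * e - e * (a - a ^ 2) * e * (e * c * e)) := by
    have hebc : e * ((a - a ^ 2) * c) * e = e := by rw [← hec, he, he]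
    rw [hebc]
    simp only [sq, mul_sub, sub_mul, mul_assoc, hee]
    abel
  rw [key]
  exact Delta.sub_mem (hdu.corner_mul_sub_mem_delta he _ _) (hdu.corner_mul_sub_mem_delta he _ _)

def IsJClean (R : Type*) [Ring R] : Prop :=
  ∀ a : R, ∃ e j : R, e * e = e ∧ j ∈ Ideal.jacobson (⊥ : Ideal R) ∧ a = e + j

namespace IsJClean

theorem of_isSemipotent_of_isDeltaU (hsp : IsSemipotent R) (hlift : IdempotentsLiftModJ R)
    (hdu : IsDeltaU R) : IsJClean R := fun a => by
  obtain ⟨e, he, hae⟩ := hlift a (hsp.sub_sq_mem_jacobson hdu a)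
  exact ⟨e, a - e, he, hae, (add_sub_cancel e a).symm⟩

theorem idempotentsLiftModJ (h : IsJClean R) : IdempotentsLiftModJ R := fun a _ => by
  obtain ⟨e, j, he, hj, rfl⟩ := h a
  exact ⟨e, he, by rwa [add_sub_cancel_left]⟩

theorem isDeltaU (h : IsJClean R) : IsDeltaU R := fun u => by
  obtain ⟨e, j, he, hj, hu⟩ := h u
  have hunit : IsUnit e := by
    simpa [hu] using Delta.jacobson_subset (neg_mem hj) u
  have he1 : e = 1 := (IsIdempotentElem.iff_eq_one_of_isUnit hunit).1 he
  rw [hu, he1, add_sub_cancel_left]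
  exact Delta.jacobson_subset hj

theorem isSemipotent (h : IsJClean R) : IsSemipotent R := fun a ha => by
  obtain ⟨e, j, he, hj, rfl⟩ := h a
  have he0 : e ≠ 0 := by
    rintro rfl
    exact ha (by rwa [zero_add])
  obtain ⟨v, hv⟩ := isUnit_one_add_of_mem_jacobson_bot hj
  have hea : e * (e + j) * ↑v⁻¹ = e := by
    rw [mul_add, he, ← mul_one_add, ← hv, mul_assoc, v.mul_inv, mul_one]
  set f := (e + j) * (↑v⁻¹ * e)
  have hef : e * f = e := by rw [← mul_assoc, ← mul_assoc, hea, he]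
  refine ⟨f, fun hf => he0 (by rw [← hef, hf, mul_zero]), ?_, _, rfl⟩
  rw [show f * f = (e + j) * (↑v⁻¹ * (e * f)) by simp only [f, mul_assoc], hef]

end IsJClean

end

theorem potent_deltaU_iff_JClean (R : Type*) [Ring R] :
    (IsSemipotent R ∧ IdempotentsLiftModJ R ∧ IsDeltaU R) ↔
      (∀ a : R, ∃ e j : R, e * e = e ∧ j ∈ Ideal.jacobson (⊥ : Ideal R) ∧ a = e + j) :=
  ⟨fun ⟨hsp, hlift, hdu⟩ => IsJClean.of_isSemipotent_of_isDeltaU hsp hlift hdu,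
    fun h => ⟨IsJClean.isSemipotent h, IsJClean.idempotentsLiftModJ h, IsJClean.isDeltaU h⟩⟩
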